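/- Let $\phi(x,y,z) = x^3 + yz^2 + y^3 + xy^4$ and let $\omega = z\,dx + x\,dy + y\,dz$. Then $\mu_0(\omega) = 1$ and $\tau_0(X) = 8$ for $X = \{\phi = 0\}$, i.e. $\dim_{\mathbb{C}} \mathbb{C}[[x,y,z]]/\langle z,x,y\rangle = 1$ and $\dim_{\mathbb{C}} \mathbb{C}[[x,y,z]]/\langle \phi, 3x^2+y^4, z^2+3y^2+4xy^3, 2yz\rangle = 8$. -/

import Mathlib

noncomputable section

/-- Model of the ring of germs of holomorphic functions at `0 ∈ ℂⁿ`
(formal power series model). -/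
abbrev On (n : ℕ) : Type := MvPowerSeries (Fin n) ℂ

/-- Formal partial derivative `∂/∂xᵢ` on `On n`. -/
def pd {n : ℕ} (i : Fin n) (f : On n) : On n :=
  fun e => ((e i : ℂ) + 1) * MvPowerSeries.coeff (e + Finsupp.single i 1) f

/-- Evaluation of the 1-form with coefficients `A` on a vector field `ξ`:
`ω(ξ) = ∑ Aᵢ ξᵢ`. -/
def ev {n : ℕ} (A : Fin n → On n) : (Fin n → On n) →ₗ[On n] On n :=
  Fintype.linearCombination (On n) A

/-- The module `Θ_X` of vector fields tangent to the hypersurface `X = {φ = 0}`: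
those `ξ` with `dφ(ξ) ∈ ⟨φ⟩`. -/
def ThetaX {n : ℕ} (φ : On n) : Submodule (On n) (Fin n → On n) :=
  Submodule.comap (ev fun i => pd i φ) (Ideal.span {φ})

/-- The submodule `Θ_X^T` of trivial logarithmic vector fields of `X = {φ = 0}`. -/
def ThetaXT {n : ℕ} (φ : On n) : Submodule (On n) (Fin n → On n) :=
  Submodule.span (On n)
    ((Set.range fun i => Pi.single i φ) ∪
      {v | ∃ j k : Fin n, j ≠ k ∧
        v = Pi.single k (pd j φ) - Pi.single j (pd k φ)})
open MvPowerSeries Finsupp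

namespace S17
def M (d : Fin 3 →₀ ℕ) : On 3 := MvPowerSeries.monomial d 1

lemma X_eq (i : Fin 3) : (MvPowerSeries.X i : On 3) = M (single i 1) := rfl

lemma M_mul (d d' : Fin 3 →₀ ℕ) : M d * M d' = M (d + d') := by
  simp [M, monomial_mul_monomial]

lemma coeff_mul_M (f : On 3) (d e : Fin 3 →₀ ℕ) :
    MvPowerSeries.coeff e (f * M d) = if d ≤ e then f (e - d) else 0 := by
  rw [M, coeff_mul_monomial]
  split <;> simp [coeff_apply]

lemma le3 {u v : Fin 3 →₀ ℕ} : u ≤ v ↔ u 0 ≤ v 0 ∧ u 1 ≤ v 1 ∧ u 2 ≤ v 2 := by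
  rw [Finsupp.le_def]
  constructor
  · intro h; exact ⟨h 0, h 1, h 2⟩
  · rintro ⟨h0, h1, h2⟩ i; fin_cases i <;> assumption

lemma eq3 {u v : Fin 3 →₀ ℕ} : u = v ↔ u 0 = v 0 ∧ u 1 = v 1 ∧ u 2 = v 2 := by
  constructor
  · rintro rfl; exact ⟨rfl, rfl, rfl⟩
  · rintro ⟨h0, h1, h2⟩; ext i; fin_cases i <;> assumption

lemma coeff_M (d e : Fin 3 →₀ ℕ) : MvPowerSeries.coeff e (M d) = if e = d then 1 else 0 := by
  classical
  simp [M, coeff_monomial]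

end S17

namespace S17

/-- simp set for evaluating finsupp component expressions -/
lemma s00 : (single (0:Fin 3) (n:ℕ)) 0 = n := by simp
lemma s01 : (single (0:Fin 3) (n:ℕ)) 1 = 0 := by simp
lemma s02 : (single (0:Fin 3) (n:ℕ)) 2 = 0 := by simp
lemma s10 : (single (1:Fin 3) (n:ℕ)) 0 = 0 := by simp [Finsupp.single_apply]
lemma s11 : (single (1:Fin 3) (n:ℕ)) 1 = n := by simp
lemma s12 : (single (1:Fin 3) (n:ℕ)) 2 = 0 := by simp [Finsupp.single_apply]
lemma s20 : (single (2:Fin 3) (n:ℕ)) 0 = 0 := by simp [Finsupp.single_apply]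
lemma s21 : (single (2:Fin 3) (n:ℕ)) 1 = 0 := by simp [Finsupp.single_apply]
lemma s22 : (single (2:Fin 3) (n:ℕ)) 2 = n := by simp

lemma tsub3 (u v : Fin 3 →₀ ℕ) (i : Fin 3) : (u - v) i = u i - v i := by
  simp [Finsupp.tsub_apply]

lemma add3 (u v : Fin 3 →₀ ℕ) (i : Fin 3) : (u + v) i = u i + v i := by simp

end S17

section part1
open S17

def L1 : On 3 →ₗ[ℂ] ℂ := MvPowerSeries.coeff 0

lemma part1_ker : LinearMap.ker L1 =
    (Ideal.span ({MvPowerSeries.X 2, MvPowerSeries.X 0, MvPowerSeries.X 1} : Set (On 3))).restrictScalars ℂ := by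
  apply le_antisymm
  · intro f hf
    simp only [LinearMap.mem_ker, L1] at hf
    simp only [Submodule.restrictScalars_mem]
    set a : On 3 := fun e => f (e + single 0 1) with ha
    set b : On 3 := fun e => if e 0 = 0 then f (e + single 1 1) else 0 with hb
    set c : On 3 := fun e => if e 0 = 0 ∧ e 1 = 0 then f (e + single 2 1) else 0 with hc
    have key : f = a * M (single 0 1) + b * M (single 1 1) + c * M (single 2 1) := by
      apply MvPowerSeries.ext
      intro e
      rw [map_add, map_add, coeff_mul_M, coeff_mul_M, coeff_mul_M, coeff_apply]
      simp only [le3, s00, s01, s02, s10, s11, s12, s20, s21, s22, ha, hb, hc, tsub3]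
      rcases Nat.eq_zero_or_pos (e 0) with h0 | h0
      · rcases Nat.eq_zero_or_pos (e 1) with h1 | h1
        · rcases Nat.eq_zero_or_pos (e 2) with h2 | h2
          · have he : e = 0 := by
              rw [eq3]; simp [h0, h1, h2]
            rw [coeff_apply] at hf
            simp only [h0, h1, h2]
            simp
            rw [he]; exact hf
          · have hle : single (2:Fin 3) 1 ≤ e := by rw [le3]; simp [s20, s21, s22]; omega
            have he : e - single 2 1 + single 2 1 = e := tsub_add_cancel_of_le hle
            have t2 : 1 ≤ e 2 := h2
            simp [h0, h1, t2, he]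
        · have hle : single (1:Fin 3) 1 ≤ e := by rw [le3]; simp [s10, s11, s12]; omega
          have he : e - single 1 1 + single 1 1 = e := tsub_add_cancel_of_le hle
          have t2 : 1 ≤ e 1 := h1
          have t3 : ¬ e 1 = 0 := by omega
          simp [h0, t2, t3, he]
      · have hle : single (0:Fin 3) 1 ≤ e := by rw [le3]; simp [s00, s01, s02]; omega
        have he : e - single 0 1 + single 0 1 = e := tsub_add_cancel_of_le hle
        have t1 : 1 ≤ e 0 := h0
        have t2 : ¬ e 0 = 0 := by omega
        simp [t1, t2, he]
    rw [key]
    refine Ideal.add_mem _ (Ideal.add_mem _ ?_ ?_) ?_ <;>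
      exact Ideal.mul_mem_left _ _ (Ideal.subset_span (by simp [X_eq]))
  · intro f hf
    simp only [Submodule.restrictScalars_mem] at hf
    rw [show ({MvPowerSeries.X 2, MvPowerSeries.X 0, MvPowerSeries.X 1} : Set (On 3)) =
      {M (single 2 1), M (single 0 1), M (single 1 1)} by simp [X_eq]] at hf
    rw [Ideal.mem_span_insert] at hf
    obtain ⟨p, w, hw, rfl⟩ := hf
    rw [Ideal.mem_span_insert] at hw
    obtain ⟨q, w2, hw2, rfl⟩ := hw
    rw [Ideal.mem_span_singleton'] at hw2
    obtain ⟨r, rfl⟩ := hw2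
    simp only [LinearMap.mem_ker, L1, map_add, coeff_mul_M]
    rw [show ((0 : Fin 3 →₀ ℕ)) = 0 from rfl]
    have : ∀ i : Fin 3, ¬ (single i 1 ≤ (0 : Fin 3 →₀ ℕ)) := by
      intro i h
      have := (Finsupp.le_def.mp h) i
      simp at this
    simp [this]
end part1

lemma finrank_quot {I : Ideal (On 3)} {V : Type*} [AddCommGroup V] [Module ℂ V]
    (L : On 3 →ₗ[ℂ] V) (hker : LinearMap.ker L = I.restrictScalars ℂ)
    (hsurj : Function.Surjective L) :
    Module.finrank ℂ (On 3 ⧸ I) = Module.finrank ℂ V := by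
  have e1 := Submodule.Quotient.restrictScalarsEquiv ℂ (I : Submodule (On 3) (On 3))
  have e2 := L.quotKerEquivOfSurjective hsurj
  rw [hker] at e2
  rw [← LinearEquiv.finrank_eq e1, LinearEquiv.finrank_eq e2]

lemma part1 :
    Module.finrank ℂ (On 3 ⧸ Ideal.span
      ({MvPowerSeries.X 2, MvPowerSeries.X 0, MvPowerSeries.X 1} : Set (On 3))) = 1 := by
  rw [finrank_quot L1 part1_ker (fun c => ⟨c • 1, by simp [L1]⟩)]
  exact Module.finrank_self ℂ

namespace S17

abbrev xx : On 3 := MvPowerSeries.X 0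
abbrev yy : On 3 := MvPowerSeries.X 1
abbrev zz : On 3 := MvPowerSeries.X 2

def G1 : On 3 := xx^3 + yy*zz^2 + yy^3 + xx*yy^4
def G2 : On 3 := 3*xx^2 + yy^4
def G3 : On 3 := zz^2 + 3*yy^2 + 4*xx*yy^3
def G4 : On 3 := 2*yy*zz
def S1 : On 3 := xx^2
def S2 : On 3 := yy^3
def S3 : On 3 := yy*zz
def S4 : On 3 := zz^2 + 3*yy^2

lemma smul_cancel {I : Ideal (On 3)} {f : On 3} (n : ℂ) (hn : n ≠ 0) (h : n • f ∈ I) :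
    f ∈ I := by
  have hf : f = n⁻¹ • (n • f) := by rw [smul_smul, inv_mul_cancel₀ hn, one_smul]
  rw [hf]
  exact Submodule.smul_of_tower_mem I _ h

lemma cancel_nat {I : Ideal (On 3)} {f g : On 3} (n : ℕ) [n.AtLeastTwo]
    (hg : g ∈ I) (h : (OfNat.ofNat n : On 3) * f = g) : f ∈ I := by
  refine smul_cancel (OfNat.ofNat n : ℂ) (by norm_num) ?_
  rw [Algebra.smul_def]
  rw [show (algebraMap ℂ (On 3)) (OfNat.ofNat n) = (OfNat.ofNat n : On 3) from map_ofNat _ n]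
  rw [h]; exact hg

lemma spanGS : Ideal.span ({G1, G2, G3, G4} : Set (On 3)) =
    Ideal.span ({S1, S2, S3, S4} : Set (On 3)) := by
  apply le_antisymm
  · rw [Ideal.span_le]
    have m1 : S1 ∈ Ideal.span ({S1, S2, S3, S4} : Set (On 3)) := Ideal.subset_span (by simp)
    have m2 : S2 ∈ Ideal.span ({S1, S2, S3, S4} : Set (On 3)) := Ideal.subset_span (by simp)
    have m3 : S3 ∈ Ideal.span ({S1, S2, S3, S4} : Set (On 3)) := Ideal.subset_span (by simp)
    have m4 : S4 ∈ Ideal.span ({S1, S2, S3, S4} : Set (On 3)) := Ideal.subset_span (by simp)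
    intro g hg
    simp only [Set.mem_insert_iff, Set.mem_singleton_iff] at hg
    rcases hg with rfl | rfl | rfl | rfl
    · rw [show G1 = xx*S1 + zz*S3 + (1+xx*yy)*S2 by unfold G1 S1 S2 S3; ring]
      exact Ideal.add_mem _ (Ideal.add_mem _ (Ideal.mul_mem_left _ _ m1)
        (Ideal.mul_mem_left _ _ m3)) (Ideal.mul_mem_left _ _ m2)
    · rw [show G2 = 3*S1 + yy*S2 by unfold G2 S1 S2; ring]
      exact Ideal.add_mem _ (Ideal.mul_mem_left _ _ m1) (Ideal.mul_mem_left _ _ m2)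
    · rw [show G3 = S4 + 4*xx*S2 by unfold G3 S2 S4; ring]
      exact Ideal.add_mem _ m4 (Ideal.mul_mem_left _ _ m2)
    · rw [show G4 = 2*S3 by unfold G4 S3; ring]
      exact Ideal.mul_mem_left _ _ m3
  · rw [Ideal.span_le]
    have m1 : G1 ∈ Ideal.span ({G1, G2, G3, G4} : Set (On 3)) := Ideal.subset_span (by simp)
    have m2 : G2 ∈ Ideal.span ({G1, G2, G3, G4} : Set (On 3)) := Ideal.subset_span (by simp)
    have m3 : G3 ∈ Ideal.span ({G1, G2, G3, G4} : Set (On 3)) := Ideal.subset_span (by simp)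
    have m4 : G4 ∈ Ideal.span ({G1, G2, G3, G4} : Set (On 3)) := Ideal.subset_span (by simp)
    have h3 : S3 ∈ Ideal.span ({G1, G2, G3, G4} : Set (On 3)) := by
      refine cancel_nat 2 m4 ?_
      unfold S3 G4; ring
    have h2 : S2 ∈ Ideal.span ({G1, G2, G3, G4} : Set (On 3)) := by
      refine cancel_nat 6 (g := 12*G1 - 4*xx*G2 - 2*yy*G3 - 5*zz*G4) ?_ ?_
      · exact Ideal.sub_mem _ (Ideal.sub_mem _ (Ideal.sub_mem _
          (Ideal.mul_mem_left _ _ m1) (Ideal.mul_mem_left _ _ m2))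
          (Ideal.mul_mem_left _ _ m3)) (Ideal.mul_mem_left _ _ m4)
      · unfold S2 G1 G2 G3 G4; ring
    have h1 : S1 ∈ Ideal.span ({G1, G2, G3, G4} : Set (On 3)) := by
      refine cancel_nat 3 (g := G2 - yy*S2) ?_ ?_
      · exact Ideal.sub_mem _ m2 (Ideal.mul_mem_left _ _ h2)
      · unfold S1 S2 G2; ring
    have h4 : S4 ∈ Ideal.span ({G1, G2, G3, G4} : Set (On 3)) := by
      rw [show S4 = G3 - 4*xx*S2 by unfold S4 G3 S2; ring]
      exact Ideal.sub_mem _ m3 (Ideal.mul_mem_left _ _ h2)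
    intro g hg
    simp only [Set.mem_insert_iff, Set.mem_singleton_iff] at hg
    rcases hg with rfl | rfl | rfl | rfl <;> assumption

end S17

namespace S17

def E (a b c : ℕ) : Fin 3 →₀ ℕ := single 0 a + single 1 b + single 2 c

@[simp] lemma E0 (a b c : ℕ) : (E a b c) 0 = a := by
  simp [E, add3, s00, s10, s20]
@[simp] lemma E1 (a b c : ℕ) : (E a b c) 1 = b := by
  simp [E, add3, s01, s11, s21]
@[simp] lemma E2 (a b c : ℕ) : (E a b c) 2 = c := by
  simp [E, add3, s02, s12, s22]

lemma M_congr {d d' : Fin 3 →₀ ℕ} (h : d = d') : M d = M d' := by rw [h]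

lemma Xpow (i : Fin 3) (n : ℕ) : (MvPowerSeries.X i : On 3) ^ n = M (single i n) := by
  rw [MvPowerSeries.X_pow_eq]; rfl

lemma MS1 : S1 = M (E 2 0 0) := by
  rw [S1, Xpow]; exact M_congr (by rw [eq3]; simp [s00, s01, s02])
lemma MS2 : S2 = M (E 0 3 0) := by
  rw [S2, Xpow]; exact M_congr (by rw [eq3]; simp [s10, s11, s12])
lemma MS3 : S3 = M (E 0 1 1) := by
  rw [S3, show yy = M (single 1 1) from rfl, show zz = M (single 2 1) from rfl, M_mul]
  exact M_congr (by rw [eq3]; simp [add3, s10, s11, s12, s20, s21, s22])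
lemma MS4 : S4 = M (E 0 0 2) + 3 * M (E 0 2 0) := by
  rw [S4, Xpow, Xpow]
  rw [show M (single (2:Fin 3) 2) = M (E 0 0 2) from
    M_congr (by rw [eq3]; simp [s20, s21, s22])]
  rw [show M (single (1:Fin 3) 2) = M (E 0 2 0) from
    M_congr (by rw [eq3]; simp [s10, s11, s12])]
end S17

namespace S17

@[simp] lemma E_le_E {a b c a' b' c' : ℕ} :
    E a b c ≤ E a' b' c' ↔ a ≤ a' ∧ b ≤ b' ∧ c ≤ c' := by
  rw [le3]; simp

@[simp] lemma E_sub_E (a b c a' b' c' : ℕ) :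
    E a b c - E a' b' c' = E (a - a') (b - b') (c - c') := by
  rw [eq3]; simp [tsub3]

def cs (i : Fin 8) : On 3 →ₗ[ℂ] ℂ :=
  match i with
  | ⟨0, _⟩ => MvPowerSeries.coeff (E 0 0 0)
  | ⟨1, _⟩ => MvPowerSeries.coeff (E 1 0 0)
  | ⟨2, _⟩ => MvPowerSeries.coeff (E 0 1 0)
  | ⟨3, _⟩ => MvPowerSeries.coeff (E 0 0 1)
  | ⟨4, _⟩ => MvPowerSeries.coeff (E 1 1 0)
  | ⟨5, _⟩ => MvPowerSeries.coeff (E 1 0 1)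
  | ⟨6, _⟩ => MvPowerSeries.coeff (E 0 2 0) - (3:ℂ) • MvPowerSeries.coeff (E 0 0 2)
  | ⟨7, _⟩ => MvPowerSeries.coeff (E 1 2 0) - (3:ℂ) • MvPowerSeries.coeff (E 1 0 2)

def L2 : On 3 →ₗ[ℂ] (Fin 8 → ℂ) := LinearMap.pi cs

lemma L2_apply (f : On 3) (i : Fin 8) : L2 f i = cs i f := rfl

lemma coeff_mul_S4 (p : On 3) (e : Fin 3 →₀ ℕ) :
    MvPowerSeries.coeff e (p * (M (E 0 0 2) + 3 * M (E 0 2 0))) =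
      (if E 0 0 2 ≤ e then p (e - E 0 0 2) else 0)
      + 3 * (if E 0 2 0 ≤ e then p (e - E 0 2 0) else 0) := by
  have h : p * (M (E 0 0 2) + 3 * M (E 0 2 0)) =
      p * M (E 0 0 2) + (MvPowerSeries.C 3 : On 3) * (p * M (E 0 2 0)) := by
    rw [show (MvPowerSeries.C 3 : On 3) = (3 : On 3) from map_ofNat _ 3]; ring
  rw [h, map_add, MvPowerSeries.coeff_C_mul, coeff_mul_M, coeff_mul_M]


end S17

namespace S17
lemma part2_ker : LinearMap.ker L2 =
    (Ideal.span ({S1, S2, S3, S4} : Set (On 3))).restrictScalars ℂ := by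
  apply le_antisymm
  · intro f hf
    simp only [LinearMap.mem_ker] at hf
    have h0 : f (E 0 0 0) = 0 := congrFun hf 0
    have h1 : f (E 1 0 0) = 0 := congrFun hf 1
    have h2 : f (E 0 1 0) = 0 := congrFun hf 2
    have h3 : f (E 0 0 1) = 0 := congrFun hf 3
    have h4 : f (E 1 1 0) = 0 := congrFun hf 4
    have h5 : f (E 1 0 1) = 0 := congrFun hf 5
    have h6 : f (E 0 2 0) - 3 * f (E 0 0 2) = 0 := congrFun hf 6
    have h7 : f (E 1 2 0) - 3 * f (E 1 0 2) = 0 := congrFun hf 7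
    simp only [Submodule.restrictScalars_mem]
    set qa : On 3 := fun e => f (e + E 2 0 0) with ha
    set qb : On 3 := fun e => if e 0 ≤ 1 then f (e + E 0 3 0) else 0 with hb
    set qc : On 3 := fun e =>
      (if e 0 ≤ 1 ∧ e 1 ≤ 1 then f (e + E 0 1 1) else 0)
      + (if e 0 ≤ 1 ∧ e 1 = 1 then -3 * f (e - E 0 1 0 + E 0 0 3) else 0) with hc
    set qd : On 3 := fun e => if e 0 ≤ 1 ∧ e 1 = 0 then f (e + E 0 0 2) else 0 with hd
    have key : f = qa * M (E 2 0 0) + qb * M (E 0 3 0) + qc * M (E 0 1 1)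
        + qd * (M (E 0 0 2) + 3 * M (E 0 2 0)) := by
      apply MvPowerSeries.ext
      intro e
      rw [map_add, map_add, map_add, coeff_mul_M, coeff_mul_M, coeff_mul_M, coeff_mul_S4,
        coeff_apply]
      simp only [ha, hb, hc, hd, le3, E0, E1, E2, tsub3, Nat.sub_zero, Nat.zero_le, true_and,
        and_true]
      rcases Nat.lt_or_ge (e 0) 2 with hA | hA
      · have tA : e 0 ≤ 1 := by omega
        have tA' : ¬ 2 ≤ e 0 := by omega
        rcases Nat.lt_or_ge (e 1) 3 with hB | hB
        · have tB' : ¬ 3 ≤ e 1 := by omega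
          have hB3 : e 1 = 0 ∨ e 1 = 1 ∨ e 1 = 2 := by omega
          have he : e = E (e 0) (e 1) (e 2) := by rw [eq3]; simp
          rcases hB3 with hB0 | hB1 | hB2
          · -- β = 0
            rcases Nat.lt_or_ge (e 2) 2 with hC | hC
            · -- γ ≤ 1 : everything vanishes, f e = 0 by the kernel equations
              have tC' : ¬ 2 ≤ e 2 := by omega
              have hz : f e = 0 := by
                rw [he, hB0]
                have hA2 : e 0 = 0 ∨ e 0 = 1 := by omega
                have hC2 : e 2 = 0 ∨ e 2 = 1 := by omega
                rcases hA2 with h | h <;> rcases hC2 with h' | h' <;> rw [h, h'] <;>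
                  assumption
              simp [tA', tB', tC', hB0, hz]
            · -- γ ≥ 2 : d-term gives f e
              have tC : 2 ≤ e 2 := hC
              have hE : e - E 0 0 2 + E 0 0 2 = e := by
                apply tsub_add_cancel_of_le; rw [le3]; simp; omega
              simp [tA, tA', tB', hB0, tC, hE]
          · -- β = 1
            rcases Nat.eq_zero_or_pos (e 2) with hC0 | hC
            · have hz : f e = 0 := by
                rw [he, hB1, hC0]
                have hA2 : e 0 = 0 ∨ e 0 = 1 := by omega
                rcases hA2 with h | h <;> rw [h] <;> assumption
              simp [tA', tB', hB1, hC0, hz]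
            · have tC : 1 ≤ e 2 := hC
              have hE : e - E 0 1 1 + E 0 1 1 = e := by
                apply tsub_add_cancel_of_le; rw [le3]; simp; omega
              simp [tA, tA', tB', hB1, tC, hE]
          · -- β = 2
            rcases Nat.eq_zero_or_pos (e 2) with hC0 | hC
            · -- γ = 0 : f e = 3 f(...) from the kernel equations
              have hB' : e - E 0 2 0 + E 0 0 2 = E (e 0) 0 2 := by
                rw [eq3]; simp [tsub3, add3]; omega
              have hz : f e = 3 * f (E (e 0) 0 2) := by
                have hA2 : e 0 = 0 ∨ e 0 = 1 := by omega
                rcases hA2 with h | h <;> rw [h] <;>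
                  rw [show e = E (e 0) 2 0 from by rw [eq3]; simp [hB2, hC0], h]
                · linear_combination h6
                · linear_combination h7
              simp [tA, tA', tB', hB2, hC0, hB', hz]
            · -- γ ≥ 1 : the c-correction cancels the d-correction
              have tC : 1 ≤ e 2 := hC
              have hE : e - E 0 1 1 + E 0 1 1 = e := by
                apply tsub_add_cancel_of_le; rw [le3]; simp; omega
              have hAB : e - E 0 1 1 - E 0 1 0 + E 0 0 3 = e - E 0 2 0 + E 0 0 2 := by
                rw [eq3]; simp [tsub3, add3]; omega
              simp only [hB2, tA, tA', tB', tC, hE, hAB]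
              norm_num
        · -- β ≥ 3 : b-term gives f e
          have tB : 3 ≤ e 1 := hB
          have t1 : ¬ e 1 - 1 ≤ 1 := by omega
          have t2 : ¬ e 1 - 1 = 1 := by omega
          have t3 : ¬ e 1 = 0 := by omega
          have t4 : ¬ e 1 - 2 = 0 := by omega
          have hE : e - E 0 3 0 + E 0 3 0 = e := by
            apply tsub_add_cancel_of_le; rw [le3]; simp; omega
          simp [tA, tA', tB, t1, t2, t3, t4, hE]
      · -- α ≥ 2 : a-term gives f e
        have tA : 2 ≤ e 0 := hA
        have tA' : ¬ e 0 ≤ 1 := by omega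
        have hE : e - E 2 0 0 + E 2 0 0 = e := by
          apply tsub_add_cancel_of_le; rw [le3]; simp; omega
        simp [tA, tA', hE]
    rw [key]
    refine Ideal.add_mem _ (Ideal.add_mem _ (Ideal.add_mem _ ?_ ?_) ?_) ?_ <;>
      refine Ideal.mul_mem_left _ _ (Ideal.subset_span ?_) <;>
      simp [MS1, MS2, MS3, MS4]
  · intro f hf
    simp only [Submodule.restrictScalars_mem] at hf
    rw [show ({S1, S2, S3, S4} : Set (On 3)) =
      {M (E 2 0 0), M (E 0 3 0), M (E 0 1 1), M (E 0 0 2) + 3 * M (E 0 2 0)} by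
        rw [MS1, MS2, MS3, MS4]] at hf
    rw [Ideal.mem_span_insert] at hf
    obtain ⟨p, w, hw, rfl⟩ := hf
    rw [Ideal.mem_span_insert] at hw
    obtain ⟨q, w2, hw2, rfl⟩ := hw
    rw [Ideal.mem_span_insert] at hw2
    obtain ⟨r, w3, hw3, rfl⟩ := hw2
    rw [Ideal.mem_span_singleton'] at hw3
    obtain ⟨s, rfl⟩ := hw3
    simp only [LinearMap.mem_ker]
    funext i
    fin_cases i <;>
      simp only [L2_apply, cs, map_add, LinearMap.sub_apply, LinearMap.smul_apply,
        coeff_mul_S4, coeff_mul_M, Pi.zero_apply, smul_eq_mul] <;>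
      simp [E_le_E, E_sub_E] <;> ring

end S17

namespace S17

@[simp] lemma E_eq_E {a b c a' b' c' : ℕ} :
    E a b c = E a' b' c' ↔ a = a' ∧ b = b' ∧ c = c' := by
  rw [eq3]; simp

lemma L2_surj : Function.Surjective L2 := by
  intro v
  refine ⟨v 0 • M (E 0 0 0) + v 1 • M (E 1 0 0) + v 2 • M (E 0 1 0) + v 3 • M (E 0 0 1)
    + v 4 • M (E 1 1 0) + v 5 • M (E 1 0 1) + v 6 • M (E 0 2 0) + v 7 • M (E 1 2 0), ?_⟩
  funext i
  fin_cases i <;>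
    simp [L2_apply, cs, map_add, map_smul, coeff_M, E_eq_E, smul_eq_mul]

end S17


open S17 in
/-- for `φ = x³ + yz² + y³ + xy⁴` and `ω = z dx + x dy + y dz`,
one has `μ₀(ω) = dim 𝓞₃/⟨z,x,y⟩ = 1` and
`τ₀(X) = dim 𝓞₃/⟨φ, 3x²+y⁴, z²+3y²+4xy³, 2yz⟩ = 8`. -/
theorem stmt_17 :
    letI x : On 3 := MvPowerSeries.X 0
    letI y : On 3 := MvPowerSeries.X 1
    letI z : On 3 := MvPowerSeries.X 2
    Module.finrank ℂ (On 3 ⧸ Ideal.span ({z, x, y} : Set (On 3))) = 1 ∧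
      Module.finrank ℂ
        (On 3 ⧸ Ideal.span
          ({x ^ 3 + y * z ^ 2 + y ^ 3 + x * y ^ 4,
            3 * x ^ 2 + y ^ 4,
            z ^ 2 + 3 * y ^ 2 + 4 * x * y ^ 3,
            2 * y * z} : Set (On 3))) = 8 := by
  refine ⟨part1, ?_⟩
  have hker : LinearMap.ker L2 =
      (Ideal.span
        ({(MvPowerSeries.X 0 : On 3) ^ 3 + MvPowerSeries.X 1 * MvPowerSeries.X 2 ^ 2 +
            MvPowerSeries.X 1 ^ 3 + MvPowerSeries.X 0 * MvPowerSeries.X 1 ^ 4,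
          3 * MvPowerSeries.X 0 ^ 2 + MvPowerSeries.X 1 ^ 4,
          MvPowerSeries.X 2 ^ 2 + 3 * MvPowerSeries.X 1 ^ 2 +
            4 * MvPowerSeries.X 0 * MvPowerSeries.X 1 ^ 3,
          2 * MvPowerSeries.X 1 * MvPowerSeries.X 2} : Set (On 3))).restrictScalars ℂ := by
    rw [show (Ideal.span
        ({(MvPowerSeries.X 0 : On 3) ^ 3 + MvPowerSeries.X 1 * MvPowerSeries.X 2 ^ 2 +
            MvPowerSeries.X 1 ^ 3 + MvPowerSeries.X 0 * MvPowerSeries.X 1 ^ 4,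
          3 * MvPowerSeries.X 0 ^ 2 + MvPowerSeries.X 1 ^ 4,
          MvPowerSeries.X 2 ^ 2 + 3 * MvPowerSeries.X 1 ^ 2 +
            4 * MvPowerSeries.X 0 * MvPowerSeries.X 1 ^ 3,
          2 * MvPowerSeries.X 1 * MvPowerSeries.X 2} : Set (On 3)))
      = Ideal.span ({S1, S2, S3, S4} : Set (On 3)) from by rw [← spanGS]; rfl]
    exact part2_ker
  have h := finrank_quot L2 hker L2_surj
  rw [Module.finrank_fin_fun] at h
  exact h
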